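/- Strong soundness and completeness of F_[→,∧]: for every set Σ of L_[→,∧]-formulas and every L_[→,∧]-formula A, Σ ⊢_{F_[→,∧]} A if and only if Σ ⊨_{F_[→,∧]} A. -/
import Mathlib


/-- Formulas of the implication-conjunction language `L_[→,∧]`. -/
inductive Fw : Type
  | var : ℕ → Fw
  | imp : Fw → Fw → Fw
  | and : Fw → Fw → Fw

/-- Theorems of the Hilbert system `F_[→,∧]`. -/
inductive FCThm : Fw → Prop
  | id (A : Fw) : FCThm (A.imp A)
  | mp {A B : Fw} : FCThm A → FCThm (A.imp B) → FCThm B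
  | afort {A : Fw} (B : Fw) : FCThm A → FCThm (B.imp A)
  | ax5 (A B : Fw) : FCThm ((A.and B).imp A)
  | ax6 (A B : Fw) : FCThm ((A.and B).imp B)
  | adj {A B : Fw} : FCThm A → FCThm B → FCThm (A.and B)
  | ax8 (A B C : Fw) : FCThm (((A.imp B).and (A.imp C)).imp (A.imp (B.and C)))
  | ax9 (B C D : Fw) : FCThm (((B.imp C).and (C.imp D)).imp (B.imp D))

/-- Derivations from assumptions in `F_[→,∧]`: members of `Γ` and theorems may be used;
rule (3) only applies to theorems; modus ponens only with a theorem major premise;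
adjunction is unrestricted. -/
inductive FCDeriv (Γ : Set Fw) : Fw → Prop
  | hyp {A : Fw} : A ∈ Γ → FCDeriv Γ A
  | thm {A : Fw} : FCThm A → FCDeriv Γ A
  | wmp {A B : Fw} : FCDeriv Γ A → FCThm (A.imp B) → FCDeriv Γ B
  | adj {A B : Fw} : FCDeriv Γ A → FCDeriv Γ B → FCDeriv Γ (A.and B)

/-- Rooted subintuitionistic `[→,∧]`-Kripke models. -/
structure KripkeModelW where
  W : Type
  g : W
  R : W → W → Prop
  root : ∀ w : W, R g w
  V : ℕ → W → Prop

/-- Forcing in a rooted subintuitionistic `[→,∧]`-Kripke model. -/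
def ForceW (M : KripkeModelW) : M.W → Fw → Prop
  | w, Fw.var p => M.V p w
  | w, Fw.imp A B => ∀ v : M.W, M.R w v → ForceW M v A → ForceW M v B
  | w, Fw.and A B => ForceW M w A ∧ ForceW M w B

/-- Theories: sets containing all theorems, closed under weak modus ponens and adjunction. -/
def Thy (Δ : Set Fw) : Prop :=
  (∀ C, FCThm C → C ∈ Δ) ∧
  (∀ E F, E ∈ Δ → FCThm (E.imp F) → F ∈ Δ) ∧
  (∀ E F, E ∈ Δ → F ∈ Δ → (E.and F) ∈ Δ)

/-- The successor theory generated by `A` over a theory `Δ`. -/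
inductive CSucc (Δ : Set Fw) (A : Fw) : Fw → Prop
  | base : CSucc Δ A A
  | thm {C} : FCThm C → CSucc Δ A C
  | wmp {E C} : CSucc Δ A E → FCThm (E.imp C) → CSucc Δ A C
  | adj {E F} : CSucc Δ A E → CSucc Δ A F → CSucc Δ A (E.and F)
  | dimp {E C} : (E.imp C) ∈ Δ → CSucc Δ A E → CSucc Δ A C

lemma trans_thm {P Q R : Fw} (h1 : FCThm (P.imp Q)) (h2 : FCThm (Q.imp R)) :
    FCThm (P.imp R) :=
  FCThm.mp (FCThm.adj h1 h2) (FCThm.ax9 P Q R)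

lemma pre_thm {E F : Fw} (A : Fw) (h : FCThm (E.imp F)) :
    FCThm ((A.imp E).imp (A.imp F)) := by
  have h1 : FCThm ((A.imp E).imp ((A.imp E).and (E.imp F))) :=
    FCThm.mp (FCThm.adj (FCThm.id (A.imp E)) (FCThm.afort (A.imp E) h))
      (FCThm.ax8 (A.imp E) (A.imp E) (E.imp F))
  exact trans_thm h1 (FCThm.ax9 A E F)

lemma succ_imp {Δ : Set Fw} (hΔ : Thy Δ) {A C : Fw} (h : CSucc Δ A C) :
    (A.imp C) ∈ Δ := by
  induction h with
  | base => exact hΔ.1 _ (FCThm.id A)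
  | thm h => exact hΔ.1 _ (FCThm.afort A h)
  | wmp _ h ih => exact hΔ.2.1 _ _ ih (pre_thm A h)
  | adj _ _ ih1 ih2 => exact hΔ.2.1 _ _ (hΔ.2.2 _ _ ih1 ih2) (FCThm.ax8 A _ _)
  | dimp hEC _ ih => exact hΔ.2.1 _ _ (hΔ.2.2 _ _ ih hEC) (FCThm.ax9 A _ _)

lemma succ_thy (Δ : Set Fw) (A : Fw) : Thy (setOf (CSucc Δ A)) :=
  ⟨fun _ h => CSucc.thm h, fun _ _ hE hEF => CSucc.wmp hE hEF,
    fun _ _ hE hF => CSucc.adj hE hF⟩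

/-- The canonical model. -/
def CM : KripkeModelW where
  W := Option {Δ : Set Fw // Thy Δ}
  g := none
  R := fun u v => match u, v with
    | none, _ => True
    | some Δ, some Θ => ∀ E F, (E.imp F) ∈ Δ.1 → E ∈ Θ.1 → F ∈ Θ.1
    | some _, none => False
  root := fun _ => trivial
  V := fun p w => match w with
    | some Δ => Fw.var p ∈ Δ.1
    | none => False

lemma truth (C : Fw) : ∀ (Δ : {Δ : Set Fw // Thy Δ}),
    ForceW CM (some Δ) C ↔ C ∈ Δ.1 := by
  induction C with
  | var p => intro Δ; exact Iff.rfl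
  | imp A B ihA ihB =>
    intro Δ
    constructor
    · intro h
      have hΘ : Thy (setOf (CSucc Δ.1 A)) := succ_thy Δ.1 A
      have hR : CM.R (some Δ) (some ⟨_, hΘ⟩) :=
        fun E F hEF hE => CSucc.dimp hEF hE
      have hforce : ForceW CM (some ⟨_, hΘ⟩) A := (ihA _).2 CSucc.base
      have hB : B ∈ setOf (CSucc Δ.1 A) := (ihB _).1 (h _ hR hforce)
      exact succ_imp Δ.2 hB
    · intro hmem v hR hA
      match v with
      | none => exact hR.elim
      | some Θ => exact (ihB Θ).2 (hR A B hmem ((ihA Θ).1 hA))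
  | and A B ihA ihB =>
    intro Δ
    constructor
    · intro h
      exact Δ.2.2.2 _ _ ((ihA Δ).1 h.1) ((ihB Δ).1 h.2)
    · intro h
      exact ⟨(ihA Δ).2 (Δ.2.2.1 _ _ h (FCThm.ax5 A B)),
        (ihB Δ).2 (Δ.2.2.1 _ _ h (FCThm.ax6 A B))⟩

lemma thm_sound {A : Fw} (h : FCThm A) :
    ∀ (M : KripkeModelW) (w : M.W), ForceW M w A := by
  induction h with
  | id A => exact fun M w v _ hv => hv
  | mp _ _ ihA ihAB => exact fun M w => ihAB M M.g w (M.root w) (ihA M w)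
  | afort B _ ih => exact fun M w v _ _ => ih M v
  | ax5 A B => exact fun M w v _ hv => hv.1
  | ax6 A B => exact fun M w v _ hv => hv.2
  | adj _ _ ih1 ih2 => exact fun M w => ⟨ih1 M w, ih2 M w⟩
  | ax8 A B C =>
    exact fun M w v _ hv u hRu hu => ⟨hv.1 u hRu hu, hv.2 u hRu hu⟩
  | ax9 B C D =>
    exact fun M w v _ hv u hRu hu => hv.2 u hRu (hv.1 u hRu hu)

/-- Strong soundness and completeness of `F_[→,∧]`. -/
theorem soundness_completeness_FC (S : Set Fw) (A : Fw) :
    FCDeriv S A ↔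
      ∀ (M : KripkeModelW) (w : M.W), (∀ B ∈ S, ForceW M w B) → ForceW M w A := by
  constructor
  · intro h M w hS
    induction h with
    | hyp hA => exact hS _ hA
    | thm hA => exact thm_sound hA M w
    | wmp _ hAB ih => exact thm_sound hAB M M.g w (M.root w) ih
    | adj _ _ ih1 ih2 => exact ⟨ih1, ih2⟩
  · intro h
    have hg : Thy {C | FCDeriv S C} :=
      ⟨fun _ hC => FCDeriv.thm hC, fun _ _ hE hEF => FCDeriv.wmp hE hEF,
        fun _ _ hE hF => FCDeriv.adj hE hF⟩
    have hforce := h CM (some ⟨_, hg⟩) (fun B hB => (truth B _).2 (FCDeriv.hyp hB))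
    exact (truth A _).1 hforce
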